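/- arXiv:1012.1630 — 6 statements merged into one kernel-verified Lean document; each statement's English description precedes it below -/
import Mathlib

section
/- For 1 ≤ d ≤ n, the elementary symmetric polynomial in all n variables satisfies e_d(x_1,...,x_n) = Σ_{t=1}^{d} (-1)^{t+1} · e_{d-t}(x_{t+1},...,x_n) · ẽ_t(x_t,...,x_n). -/
open MvPolynomial

/-- The index set of variables `x_a, x_{a+1}, ..., x_b` (1-indexed) among `x_1, ..., x_n`. -/
def seg (n a b : ℕ) : Finset (Fin n) :=
  Finset.univ.filter fun i => a ≤ (i : ℕ) + 1 ∧ (i : ℕ) + 1 ≤ b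

/-- Truncated elementary symmetric polynomial of degree `d` in the variables indexed by `S`. -/
noncomputable def ee (n : ℕ) (d : ℤ) (S : Finset (Fin n)) : MvPolynomial (Fin n) ℤ :=
  if 0 ≤ d then ∑ A ∈ S.powersetCard d.toNat, ∏ i ∈ A, X i else 0

/-- Truncated complete homogeneous symmetric polynomial of degree `d` in variables indexed by `S`. -/
noncomputable def te (n : ℕ) (d : ℤ) (S : Finset (Fin n)) : MvPolynomial (Fin n) ℤ :=
  if 0 ≤ d then ∑ m ∈ S.sym d.toNat, ((m : Multiset (Fin n)).map X).prod else 0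

noncomputable def E (n k : ℕ) (S : Finset (Fin n)) : MvPolynomial (Fin n) ℤ :=
  ∑ A ∈ S.powersetCard k, ∏ i ∈ A, X i

noncomputable def H (n k : ℕ) (S : Finset (Fin n)) : MvPolynomial (Fin n) ℤ :=
  ∑ m ∈ S.sym k, ((m : Multiset (Fin n)).map X).prod

lemma ee_coe (n k : ℕ) (S : Finset (Fin n)) : ee n (k : ℤ) S = E n k S := by
  simp [ee, E]

lemma te_coe (n k : ℕ) (S : Finset (Fin n)) : te n (k : ℤ) S = H n k S := by
  simp [te, H]

lemma E_zero (n : ℕ) (S : Finset (Fin n)) : E n 0 S = 1 := by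
  simp [E]

lemma H_zero (n : ℕ) (S : Finset (Fin n)) : H n 0 S = 1 := by
  have h0 : ((∅ : Sym (Fin n) 0) : Multiset (Fin n)) = 0 := rfl
  simp [H, h0]

lemma E_empty (n k : ℕ) : E n (k+1) (∅ : Finset (Fin n)) = 0 := by
  rw [E, Finset.powersetCard_eq_empty.mpr (by simp)]
  simp

lemma H_empty (n k : ℕ) : H n (k+1) (∅ : Finset (Fin n)) = 0 := by
  simp [H]

lemma seg_eq_empty {n a : ℕ} (h : n < a) : seg n a n = ∅ := by
  ext i
  simp only [seg, Finset.mem_filter, Finset.mem_univ, true_and, Finset.notMem_empty, iff_false]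
  omega

lemma seg_insert {n a : ℕ} (h1 : 1 ≤ a) (h2 : a ≤ n) :
    seg n a n = insert (⟨a - 1, by omega⟩ : Fin n) (seg n (a+1) n) := by
  ext i
  simp only [seg, Finset.mem_filter, Finset.mem_univ, true_and, Finset.mem_insert, Fin.ext_iff]
  omega

lemma seg_notMem {n a : ℕ} (h1 : 1 ≤ a) (h2 : a ≤ n) :
    (⟨a - 1, by omega⟩ : Fin n) ∉ seg n (a+1) n := by
  simp only [seg, Finset.mem_filter, Finset.mem_univ, true_and]
  omega

lemma E_insert (n k : ℕ) {i : Fin n} {S : Finset (Fin n)} (h : i ∉ S) :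
    E n (k+1) (insert i S) = E n (k+1) S + X i * E n k S := by
  classical
  have hd : Disjoint (S.powersetCard (k+1)) ((S.powersetCard k).image (insert i)) := by
    rw [Finset.disjoint_left]
    rintro A hA hA'
    obtain ⟨B, hB, rfl⟩ := Finset.mem_image.mp hA'
    exact h ((Finset.mem_powersetCard.mp hA).1 (Finset.mem_insert_self i B))
  have hinj : ∀ A ∈ S.powersetCard k, ∀ B ∈ S.powersetCard k, insert i A = insert i B → A = B := by
    intro A hA B hB hAB
    have hiA : i ∉ A := fun c => h ((Finset.mem_powersetCard.mp hA).1 c)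
    have hiB : i ∉ B := fun c => h ((Finset.mem_powersetCard.mp hB).1 c)
    rw [← Finset.erase_insert hiA, ← Finset.erase_insert hiB, hAB]
  unfold E
  rw [Finset.powersetCard_succ_insert h, Finset.sum_union hd, Finset.sum_image hinj,
    Finset.mul_sum]
  congr 1
  refine Finset.sum_congr rfl fun A hA => ?_
  exact Finset.prod_insert (fun c => h ((Finset.mem_powersetCard.mp hA).1 c))

lemma H_insert (n k : ℕ) {i : Fin n} {S : Finset (Fin n)} (h : i ∉ S) :
    H n (k+1) (insert i S) = H n (k+1) S + X i * H n k (insert i S) := by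
  classical
  have hsplit : (insert i S).sym (k+1)
      = S.sym (k+1) ∪ ((insert i S).sym k).image (Sym.cons i) := by
    ext m
    simp only [Finset.mem_union, Finset.mem_image, Finset.mem_sym_iff, Finset.mem_insert]
    constructor
    · intro hm
      by_cases hi : i ∈ m
      · refine Or.inr ⟨m.erase i hi, fun a ha => ?_, Sym.cons_erase hi⟩
        exact hm a (by rw [← Sym.cons_erase hi]; exact Sym.mem_cons_of_mem ha)
      · exact Or.inl fun a ha => (hm a ha).resolve_left (by rintro rfl; exact hi ha)
    · rintro (hm | ⟨m', hm', rfl⟩)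
      · exact fun a ha => Or.inr (hm a ha)
      · intro a ha
        rcases Sym.mem_cons.mp ha with rfl | ha'
        · exact Or.inl rfl
        · exact hm' a ha'
  have hd : Disjoint (S.sym (k+1)) (((insert i S).sym k).image (Sym.cons i)) := by
    rw [Finset.disjoint_left]
    rintro m hm hm'
    obtain ⟨m', hm', rfl⟩ := Finset.mem_image.mp hm'
    exact h (Finset.mem_sym_iff.mp hm i (Sym.mem_cons_self i m'))
  have hinj : ∀ x ∈ (insert i S).sym k, ∀ y ∈ (insert i S).sym k,
      Sym.cons i x = Sym.cons i y → x = y :=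
    fun x _ y _ hxy => (Sym.cons_inj_right i x y).mp hxy
  unfold H
  rw [hsplit, Finset.sum_union hd, Finset.sum_image hinj, Finset.mul_sum]
  congr 1
  refine Finset.sum_congr rfl fun m' _ => ?_
  rw [Sym.coe_cons, Multiset.map_cons, Multiset.prod_cons]

/-- `G` in the telescoping argument. -/
noncomputable def Gf (n d m t : ℕ) : MvPolynomial (Fin n) ℤ :=
  (-1)^t * (E n (d - t) (seg n (m + t) n) * H n t (seg n (m + t) n))

/-- The extra term, equal to the summand of the shifted (by one variable) sum. -/
noncomputable def Tf (n d m i : ℕ) : MvPolynomial (Fin n) ℤ :=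
  (-1)^(i+1) * (E n (d - i) (seg n (m + i + 1) n) * H n i (seg n (m + i) n))

/-- The summand of the main sum (for the claim with variables starting at `x_m`). -/
noncomputable def Wf (n d m i : ℕ) : MvPolynomial (Fin n) ℤ :=
  (-1)^(i+2) * (E n (d - (i+1)) (seg n (m + i + 1) n) * H n (i+1) (seg n (m + i) n))

lemma key (n d m i : ℕ) (h1 : 1 ≤ m) (hid : i < d) :
    Wf n d m i = Gf n d m i - Gf n d m (i+1) + Tf n d m i := by
  have e1 : m + (i+1) = m + i + 1 := rfl
  unfold Wf Gf Tf
  rw [e1]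
  have e2 : d - i = (d - (i+1)) + 1 := by omega
  by_cases hle : m + i ≤ n
  · have hseg : seg n (m+i) n = insert (⟨m + i - 1, by omega⟩ : Fin n) (seg n (m+i+1) n) :=
      seg_insert (by omega) hle
    have hnot : (⟨m + i - 1, by omega⟩ : Fin n) ∉ seg n (m+i+1) n := seg_notMem (by omega) hle
    rw [hseg, H_insert n i hnot, e2, E_insert n (d - (i+1)) hnot]
    ring
  · rw [seg_eq_empty (show n < m + i by omega), seg_eq_empty (show n < m + i + 1 by omega), e2]
    ring

lemma main (n d : ℕ) (hd : 1 ≤ d) :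
    ∀ j m : ℕ, 1 ≤ m → n + 1 ≤ m + j →
      E n d (seg n m n) = ∑ i ∈ Finset.range d, Wf n d m i := by
  intro j
  induction j with
  | zero =>
    intro m h1 hmn
    obtain ⟨e, rfl⟩ : ∃ e, d = e + 1 := ⟨d - 1, by omega⟩
    rw [seg_eq_empty (show n < m by omega), E_empty]
    symm
    refine Finset.sum_eq_zero fun i hi => ?_
    unfold Wf
    rw [seg_eq_empty (show n < m + i by omega), H_empty, mul_zero, mul_zero]
  | succ j ih =>
    intro m h1 hmn
    have IH : E n d (seg n (m+1) n) = ∑ i ∈ Finset.range d, Wf n d (m+1) i :=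
      ih (m+1) (by omega) (by omega)
    have hW : ∀ i, Wf n d (m+1) i = Tf n d m (i+1) := by
      intro i
      unfold Wf Tf
      rw [show m + 1 + i + 1 = m + (i+1) + 1 by omega, show m + 1 + i = m + (i+1) by omega]
    obtain ⟨e, rfl⟩ : ∃ e, d = e + 1 := ⟨d - 1, by omega⟩
    symm
    calc ∑ i ∈ Finset.range (e+1), Wf n (e+1) m i
        = ∑ i ∈ Finset.range (e+1),
            (Gf n (e+1) m i - Gf n (e+1) m (i+1) + Tf n (e+1) m i) :=
          Finset.sum_congr rfl fun i hi => key n (e+1) m i h1 (Finset.mem_range.mp hi)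
      _ = (∑ i ∈ Finset.range (e+1), (Gf n (e+1) m i - Gf n (e+1) m (i+1)))
            + ∑ i ∈ Finset.range (e+1), Tf n (e+1) m i := by
          rw [Finset.sum_add_distrib]
      _ = (Gf n (e+1) m 0 - Gf n (e+1) m (e+1))
            + ((∑ i ∈ Finset.range e, Tf n (e+1) m (i+1)) + Tf n (e+1) m 0) := by
          rw [Finset.sum_range_sub' (Gf n (e+1) m) (e+1), Finset.sum_range_succ']
      _ = (Gf n (e+1) m 0 - Gf n (e+1) m (e+1))
            + ((E n (e+1) (seg n (m+1) n) - Tf n (e+1) m (e+1)) + Tf n (e+1) m 0) := by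
          congr 2
          have : E n (e+1) (seg n (m+1) n)
              = (∑ i ∈ Finset.range e, Tf n (e+1) m (i+1)) + Tf n (e+1) m (e+1) := by
            rw [IH]
            simp only [hW]
            rw [Finset.sum_range_succ]
          rw [this]; ring
      _ = E n (e+1) (seg n m n) := by
          unfold Gf Tf
          simp only [Nat.sub_zero, Nat.sub_self, Nat.add_zero, E_zero, H_zero,
            show m + 0 = m from rfl]
          ring

theorem stmt4 (n d : ℕ) (hd : 1 ≤ d) (hdn : d ≤ n) :
    ee n d (seg n 1 n) =
      ∑ t ∈ Finset.Icc 1 d,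
        (-1 : MvPolynomial (Fin n) ℤ) ^ (t + 1) *
          (ee n ((d : ℤ) - t) (seg n (t + 1) n) * te n t (seg n t n)) := by
  have h0 : ee n (d : ℤ) (seg n 1 n) = E n d (seg n 1 n) := ee_coe n d _
  rw [h0, main n d hd n 1 le_rfl (by omega)]
  rw [show Finset.Icc 1 d = Finset.Ico 1 (d+1) by rw [Finset.Ico_add_one_right_eq_Icc],
    Finset.sum_Ico_eq_sum_range]
  simp only [Nat.add_sub_cancel]
  refine Finset.sum_congr rfl fun i hi => ?_
  have hid : i < d := Finset.mem_range.mp hi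
  unfold Wf
  have hc : (d : ℤ) - (↑(1 + i) : ℤ) = ((d - (i+1) : ℕ) : ℤ) := by push_cast; omega
  rw [hc, ee_coe, te_coe]
  rw [show 1 + i + 1 = i + 2 by omega, show 1 + i = i + 1 by omega]
end

section
/- For any integers 0 < d ≤ r ≤ n, the following identity holds: e_d(x_1,...,x_r) = (-1)^d · ẽ_d(x_{r+1},...,x_n) + Σ_{t=1}^{d} (-1)^{t+1} · e_{d-t}(x_{t+1},...,x_r) · ẽ_t(x_t,...,x_n). -/
open MvPolynomial

/-!
Write `E_k(a) = e_k(x_a, …, x_r)` and `H_k(a) = ẽ_k(x_a, …, x_n)`. Both satisfy the one-variable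
recursions `E_k(a) - E_k(a+1) = x_a E_{k-1}(a+1)` and `H_k(a) - H_k(a+1) = x_a H_{k-1}(a)`, hence
the exchange rule `E_{k-1}(a+1) (H_j(a) - H_j(a+1)) = (E_k(a) - E_k(a+1)) H_{j-1}(a)`.
Generalise the identity by starting the left side at `x_{s+1}` and shifting every index `t` on
the right to `s + t`. By the exchange rule, the sum for `s` minus the sum for `s + 1`
telescopes to `E_d(s+1) - E_d(s+2)`, so the identity passes from `s + 1` to `s`. For
`s = r + 1 - d` the left side has too few variables and only the `t = d` summand survives,
cancelling the `ẽ_d` term.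
-/

open Finset

theorem Finset.sym_succ_insert {α : Type*} [DecidableEq α] (a : α) (s : Finset α) (m : ℕ) :
    (insert a s).sym (m + 1) = ((insert a s).sym m).image (Sym.cons a) ∪ s.sym (m + 1) := by
  ext μ
  simp only [mem_union, mem_image, mem_sym_iff]
  constructor
  · intro h
    by_cases ha : a ∈ μ
    · exact .inl ⟨μ.erase a ha, fun b hb => h b (Sym.cons_erase ha ▸ Sym.mem_cons_of_mem hb),
        Sym.cons_erase ha⟩
    · exact .inr fun b hb => (mem_insert.1 (h b hb)).resolve_left (by rintro rfl; exact ha hb)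
  · rintro (⟨μ, hμ, rfl⟩ | h) b hb
    · rcases Sym.mem_cons.1 hb with rfl | hb
      · exact mem_insert_self b s
      · exact hμ b hb
    · exact mem_insert_of_mem (h b hb)

section Seg

variable {n a b : ℕ}

lemma seg_eq_insert (ha : 1 ≤ a) (hab : a ≤ b) (hbn : b ≤ n) :
    seg n a b = insert (⟨a - 1, by omega⟩ : Fin n) (seg n (a + 1) b) := by
  ext i
  simp only [seg, mem_insert, mem_filter, mem_univ, true_and, Fin.ext_iff]
  omega

lemma not_mem_seg_succ (ha : 1 ≤ a) (han : a - 1 < n) :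
    (⟨a - 1, han⟩ : Fin n) ∉ seg n (a + 1) b := by
  simp only [seg, mem_filter, mem_univ, true_and]
  omega

lemma card_seg (ha : 1 ≤ a) (hbn : b ≤ n) : #(seg n a b) = b + 1 - a := by
  have : (seg n a b).map Fin.valEmbedding = Ico (a - 1) b := by
    ext x
    simp only [mem_map, seg, mem_filter, mem_univ, true_and, mem_Ico, Fin.valEmbedding_apply]
    exact ⟨by rintro ⟨i, hi, rfl⟩; omega, fun hx => ⟨⟨x, by omega⟩, by simp only; omega, rfl⟩⟩
  rw [← card_map, this, Nat.card_Ico]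
  omega

end Seg

section Recursions

variable {n : ℕ}

@[simp] lemma ee_zero (S : Finset (Fin n)) : ee n 0 S = 1 := by
  simp [ee]

lemma ee_of_neg {k : ℤ} (hk : k < 0) (S : Finset (Fin n)) : ee n k S = 0 :=
  if_neg (by omega)

lemma ee_eq_zero_of_card_lt {k : ℤ} {S : Finset (Fin n)} (h : (#S : ℤ) < k) : ee n k S = 0 := by
  rw [ee, if_pos (by omega), powersetCard_eq_empty.2 (by omega), sum_empty]

@[simp] lemma te_zero (S : Finset (Fin n)) : te n 0 S = 1 := by
  simp [te]
  rfl

lemma te_of_neg {k : ℤ} (hk : k < 0) (S : Finset (Fin n)) : te n k S = 0 :=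
  if_neg (by omega)

lemma ee_insert {a : Fin n} {S : Finset (Fin n)} (ha : a ∉ S) (k : ℤ) :
    ee n k (insert a S) = X a * ee n (k - 1) S + ee n k S := by
  rcases lt_trichotomy k 0 with hk | rfl | hk
  · simp [ee_of_neg hk, ee_of_neg (show k - 1 < 0 by omega)]
  · simp [ee_of_neg (show (-1 : ℤ) < 0 by omega)]
  rw [ee, ee, ee, if_pos (by omega), if_pos (by omega), if_pos (by omega),
    show k.toNat = (k - 1).toNat + 1 by omega, powersetCard_succ_insert ha, add_comm,
    sum_union, sum_image, mul_sum]
  · congr 1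
    refine sum_congr rfl fun A hA => ?_
    rw [prod_insert fun haA => ha ((mem_powersetCard.1 hA).1 haA)]
  · intro A hA B hB hAB
    have hA : a ∉ A := fun h => ha ((mem_powersetCard.1 hA).1 h)
    have hB : a ∉ B := fun h => ha ((mem_powersetCard.1 hB).1 h)
    rw [← erase_insert hA, ← erase_insert hB, hAB]
  · refine disjoint_left.2 fun B hB hB' => ?_
    obtain ⟨A, -, rfl⟩ := mem_image.1 hB'
    exact ha ((mem_powersetCard.1 hB).1 (mem_insert_self a A))

lemma te_insert {a : Fin n} {S : Finset (Fin n)} (ha : a ∉ S) (k : ℤ) :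
    te n k (insert a S) = X a * te n (k - 1) (insert a S) + te n k S := by
  rcases lt_trichotomy k 0 with hk | rfl | hk
  · simp [te_of_neg hk, te_of_neg (show k - 1 < 0 by omega)]
  · simp [te]
  rw [te, te, te, if_pos (by omega), if_pos (by omega), if_pos (by omega),
    show k.toNat = (k - 1).toNat + 1 by omega, sym_succ_insert, sum_union, sum_image, mul_sum]
  · congr 1
    refine sum_congr rfl fun μ _ => ?_
    rw [Sym.coe_cons, Multiset.map_cons, Multiset.prod_cons]
  · exact fun μ _ ν _ h => (Sym.cons_inj_right a μ ν).1 h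
  · refine disjoint_left.2 fun μ hμ hμ' => ?_
    obtain ⟨ν, -, rfl⟩ := mem_image.1 hμ
    exact ha (mem_sym_iff.1 hμ' a (Sym.mem_cons_self a ν))

end Recursions

section Staircase

variable {n r : ℕ}

lemma ee_seg_sub_succ {a : ℕ} (ha : 1 ≤ a) (har : a ≤ r) (hrn : r ≤ n) (k : ℤ) :
    ee n k (seg n a r) - ee n k (seg n (a + 1) r) =
      X (⟨a - 1, by omega⟩ : Fin n) * ee n (k - 1) (seg n (a + 1) r) := by
  rw [seg_eq_insert ha har hrn, ee_insert (not_mem_seg_succ ha _)]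
  ring

lemma te_seg_sub_succ {a : ℕ} (ha : 1 ≤ a) (han : a ≤ n) (k : ℤ) :
    te n k (seg n a n) - te n k (seg n (a + 1) n) =
      X (⟨a - 1, by omega⟩ : Fin n) * te n (k - 1) (seg n a n) := by
  rw [seg_eq_insert ha han le_rfl, te_insert (not_mem_seg_succ ha _)]
  ring

lemma ee_te_seg_exchange {a : ℕ} (ha : 1 ≤ a) (har : a ≤ r) (hrn : r ≤ n) (k j : ℤ) :
    ee n (k - 1) (seg n (a + 1) r) * (te n j (seg n a n) - te n j (seg n (a + 1) n)) =
      (ee n k (seg n a r) - ee n k (seg n (a + 1) r)) * te n (j - 1) (seg n a n) := by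
  rw [ee_seg_sub_succ ha har hrn, te_seg_sub_succ ha (har.trans hrn)]
  ring

noncomputable def stairSum (n r d s : ℕ) : MvPolynomial (Fin n) ℤ :=
  ∑ t ∈ Icc 1 d, (-1) ^ (t + 1) *
    (ee n ((d : ℤ) - t) (seg n (s + t + 1) r) * te n t (seg n (s + t) n))

lemma stairSum_sub_succ {d s : ℕ} (hsd : s + d ≤ r) (hrn : r ≤ n) :
    stairSum n r d s - stairSum n r d (s + 1) =
      ee n d (seg n (s + 1) r) - ee n d (seg n (s + 2) r) := by
  -- `G i = (-1)^i x_{s+i+1} E_{d-i-1}(s+i+2) H_i(s+i+1)`, written without `x_{s+i+1}` so that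
  -- `G d = 0` needs no bound on the index `s + d + 1`.
  set G : ℕ → MvPolynomial (Fin n) ℤ := fun i => (-1) ^ i *
    ((ee n ((d : ℤ) - i) (seg n (s + i + 1) r) - ee n ((d : ℤ) - i) (seg n (s + i + 2) r)) *
      te n i (seg n (s + i + 1) n))
  calc stairSum n r d s - stairSum n r d (s + 1) = ∑ i ∈ range d, (G i - G (i + 1)) := by
        rw [stairSum, stairSum, ← sum_sub_distrib, ← Ico_add_one_right_eq_Icc,
          sum_Ico_eq_sum_range, Nat.add_sub_cancel]
        refine sum_congr rfl fun i hi => ?_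
        have key := ee_te_seg_exchange (a := s + i + 1) (by omega)
          (by have := mem_range.1 hi; omega) hrn (d - i) (i + 1)
        simp only [G]
        push_cast
        ring_nf at key ⊢
        linear_combination (-1) ^ i * key
    _ = ee n d (seg n (s + 1) r) - ee n d (seg n (s + 2) r) := by
        rw [sum_range_sub']
        simp [G]

lemma stairSum_of_add_eq {d s : ℕ} (hd : 0 < d) (hs : s + d = r + 1) (hrn : r ≤ n) :
    stairSum n r d s = (-1) ^ (d + 1) * te n d (seg n (r + 1) n) := by
  rw [stairSum, sum_eq_single_of_mem d (mem_Icc.2 ⟨hd, le_rfl⟩), sub_self, ee_zero, one_mul, hs]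
  intro t ht htd
  have := mem_Icc.1 ht
  rw [ee_eq_zero_of_card_lt (by rw [card_seg (by omega) hrn]; omega), zero_mul, mul_zero]

lemma ee_seg_eq_stairSum {d s : ℕ} (hd : 0 < d) (hs : s + d ≤ r + 1) (hrn : r ≤ n) :
    ee n d (seg n (s + 1) r) = (-1) ^ d * te n d (seg n (r + 1) n) + stairSum n r d s := by
  induction hk : r + 1 - (s + d) generalizing s with
  | zero =>
    rw [ee_eq_zero_of_card_lt (by rw [card_seg (by omega) hrn]; omega),
      stairSum_of_add_eq hd (by omega) hrn]
    ring
  | succ k ih =>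
    have ih : ee n d (seg n (s + 2) r) = _ := ih (by omega) (by omega)
    linear_combination ih - stairSum_sub_succ (d := d) (s := s) (by omega) hrn

end Staircase

theorem stmt5 (n d r : ℕ) (hd : 0 < d) (hdr : d ≤ r) (hrn : r ≤ n) :
    ee n d (seg n 1 r) =
      (-1 : MvPolynomial (Fin n) ℤ) ^ d * te n d (seg n (r + 1) n) +
        ∑ t ∈ Finset.Icc 1 d,
          (-1 : MvPolynomial (Fin n) ℤ) ^ (t + 1) *
            (ee n ((d : ℤ) - t) (seg n (t + 1) r) * te n t (seg n t n)) := by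
  simpa [stairSum] using ee_seg_eq_stairSum (s := 0) hd (by omega) hrn
end

section
/- The map h ↦ β defined by β_i = i - #{k ∈ {1,...,n} : h_k < i} is a bijection between Hessenberg functions and degree tuples. -/
lemma stmt12_aux_card (n m : ℕ) (h : m ≤ n) :
    (Finset.univ.filter fun i : Fin n => (i : ℕ) < m).card = m := by
  rw [← Fintype.card_subtype]
  exact (Fintype.card_congr ⟨fun i => (⟨i.1.1, i.2⟩ : Fin m),
    fun j => ⟨⟨j.1, lt_of_lt_of_le j.2 h⟩, j.2⟩, fun i => rfl, fun j => rfl⟩).trans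
    (Fintype.card_fin m)

theorem stmt12 (n : ℕ) (hn : 0 < n) :
    Set.BijOn
      (fun h : Fin n → ℕ => fun i : Fin n =>
        (i : ℕ) + 1 - (Finset.univ.filter fun k : Fin n => h k < (i : ℕ) + 1).card)
      {h : Fin n → ℕ |
        (∀ i : Fin n, (i : ℕ) + 1 ≤ h i ∧ h i ≤ n) ∧
          ∀ i j : Fin n, i ≤ j → h i ≤ h j}
      {β : Fin n → ℕ |
        (∀ i : Fin n, 1 ≤ β i ∧ β i ≤ (i : ℕ) + 1) ∧
          ∀ i j : Fin n, (j : ℕ) + 1 = (i : ℕ) → β i ≤ β j + 1} := by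
  classical
  set g : (Fin n → ℕ) → Fin n → ℕ :=
    fun β k => (Finset.univ.filter fun i : Fin n => (i : ℕ) + 1 - β i ≤ (k : ℕ)).card with hg
  -- facts for h in the Hessenberg set
  have hc_le : ∀ h : Fin n → ℕ, (∀ i : Fin n, (i : ℕ) + 1 ≤ h i) →
      ∀ i : Fin n, (Finset.univ.filter fun k : Fin n => h k < (i : ℕ) + 1).card ≤ (i : ℕ) := by
    intro h hb i
    calc (Finset.univ.filter fun k : Fin n => h k < (i : ℕ) + 1).card ≤ (Finset.univ.filter fun k : Fin n => (k : ℕ) < (i : ℕ)).card := by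
          apply Finset.card_le_card
          intro k hk
          simp only [Finset.mem_filter, Finset.mem_univ, true_and] at hk ⊢
          have := hb k
          omega
      _ = (i : ℕ) := stmt12_aux_card n i (le_of_lt i.isLt)
  have hiff : ∀ h : Fin n → ℕ, (∀ i : Fin n, (i : ℕ) + 1 ≤ h i) →
      (∀ i j : Fin n, i ≤ j → h i ≤ h j) →
      ∀ i k : Fin n, ((Finset.univ.filter fun k : Fin n => h k < (i : ℕ) + 1).card ≤ (k : ℕ) ↔ (i : ℕ) < h k) := by
    intro h hb hm i k
    constructor
    · intro hle
      by_contra hcon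
      push_neg at hcon
      have hsub : (Finset.univ.filter fun j : Fin n => (j : ℕ) < (k : ℕ) + 1) ⊆
          (Finset.univ.filter fun j : Fin n => h j < (i : ℕ) + 1) := by
        intro j hj
        simp only [Finset.mem_filter, Finset.mem_univ, true_and] at hj ⊢
        have : h j ≤ h k := hm j k (by exact Fin.le_def.mpr (by omega))
        omega
      have := Finset.card_le_card hsub
      rw [stmt12_aux_card n ((k : ℕ) + 1) k.isLt] at this
      exact absurd (le_trans this hle) (by omega)
    · intro hlt
      calc (Finset.univ.filter fun k : Fin n => h k < (i : ℕ) + 1).card ≤ (Finset.univ.filter fun j : Fin n => (j : ℕ) < (k : ℕ)).card := by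
            apply Finset.card_le_card
            intro j hj
            simp only [Finset.mem_filter, Finset.mem_univ, true_and] at hj ⊢
            by_contra hcon
            push_neg at hcon
            have : h k ≤ h j := hm k j (Fin.le_def.mpr hcon)
            omega
        _ = (k : ℕ) := stmt12_aux_card n k (le_of_lt k.isLt)
  -- facts for β in the degree-tuple set
  have hd_mono : ∀ β : Fin n → ℕ, (∀ i : Fin n, 1 ≤ β i ∧ β i ≤ (i : ℕ) + 1) →
      (∀ i j : Fin n, (j : ℕ) + 1 = (i : ℕ) → β i ≤ β j + 1) →
      ∀ i j : Fin n, i ≤ j → (i : ℕ) + 1 - β i ≤ (j : ℕ) + 1 - β j := by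
    intro β hb hs i j hij
    obtain ⟨a, ha⟩ := i
    obtain ⟨b, hbn⟩ := j
    simp only at *
    have hab : a ≤ b := Fin.le_def.mp hij
    clear hij
    induction b, hab using Nat.le_induction with
    | base => rfl
    | succ b hab ih =>
      have hbn' : b < n := by omega
      have step : β ⟨b + 1, hbn⟩ ≤ β ⟨b, hbn'⟩ + 1 := hs ⟨b + 1, hbn⟩ ⟨b, hbn'⟩ rfl
      have h1 := hb ⟨b, hbn'⟩
      have h2 := hb ⟨b + 1, hbn⟩
      have := ih hbn'
      simp only at *
      omega
  have hgiff : ∀ β : Fin n → ℕ, (∀ i : Fin n, 1 ≤ β i ∧ β i ≤ (i : ℕ) + 1) →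
      (∀ i j : Fin n, (j : ℕ) + 1 = (i : ℕ) → β i ≤ β j + 1) →
      ∀ i k : Fin n, (g β k ≤ (i : ℕ) ↔ (k : ℕ) < (i : ℕ) + 1 - β i) := by
    intro β hb hs i k
    constructor
    · intro hle
      by_contra hcon
      push_neg at hcon
      have hsub : (Finset.univ.filter fun j : Fin n => (j : ℕ) < (i : ℕ) + 1) ⊆
          (Finset.univ.filter fun j : Fin n => (j : ℕ) + 1 - β j ≤ (k : ℕ)) := by
        intro j hj
        simp only [Finset.mem_filter, Finset.mem_univ, true_and] at hj ⊢
        have := hd_mono β hb hs j i (Fin.le_def.mpr (by omega))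
        omega
      have := Finset.card_le_card hsub
      rw [stmt12_aux_card n ((i : ℕ) + 1) i.isLt] at this
      exact absurd (le_trans this hle) (by omega)
    · intro hlt
      calc g β k ≤ (Finset.univ.filter fun j : Fin n => (j : ℕ) < (i : ℕ)).card := by
            apply Finset.card_le_card
            intro j hj
            simp only [Finset.mem_filter, Finset.mem_univ, true_and] at hj ⊢
            by_contra hcon
            push_neg at hcon
            have := hd_mono β hb hs i j (Fin.le_def.mpr hcon)
            omega
        _ = (i : ℕ) := stmt12_aux_card n i (le_of_lt i.isLt)
  -- maps-to for f
  have hmapf : Set.MapsTo (fun h : Fin n → ℕ => fun i : Fin n =>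
        (i : ℕ) + 1 - (Finset.univ.filter fun k : Fin n => h k < (i : ℕ) + 1).card)
      {h : Fin n → ℕ |
        (∀ i : Fin n, (i : ℕ) + 1 ≤ h i ∧ h i ≤ n) ∧
          ∀ i j : Fin n, i ≤ j → h i ≤ h j}
      {β : Fin n → ℕ |
        (∀ i : Fin n, 1 ≤ β i ∧ β i ≤ (i : ℕ) + 1) ∧
          ∀ i j : Fin n, (j : ℕ) + 1 = (i : ℕ) → β i ≤ β j + 1} := by
    intro h ⟨hb, hm⟩
    have hb1 : ∀ i : Fin n, (i : ℕ) + 1 ≤ h i := fun i => (hb i).1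
    simp only [Set.mem_setOf_eq]
    constructor
    · intro i
      have := hc_le h hb1 i
      constructor <;> omega
    · intro i j hji
      have h1 := hc_le h hb1 i
      have h2 := hc_le h hb1 j
      have hsub : (Finset.univ.filter fun k : Fin n => h k < (j : ℕ) + 1).card ≤ (Finset.univ.filter fun k : Fin n => h k < (i : ℕ) + 1).card := by
        apply Finset.card_le_card
        intro k hk
        simp only [Finset.mem_filter, Finset.mem_univ, true_and] at hk ⊢
        omega
      show (i : ℕ) + 1 - (Finset.univ.filter fun k : Fin n => h k < (i : ℕ) + 1).card ≤ (j : ℕ) + 1 - (Finset.univ.filter fun k : Fin n => h k < (j : ℕ) + 1).card + 1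
      omega
  -- maps-to for g
  have hmapg : Set.MapsTo g
      {β : Fin n → ℕ |
        (∀ i : Fin n, 1 ≤ β i ∧ β i ≤ (i : ℕ) + 1) ∧
          ∀ i j : Fin n, (j : ℕ) + 1 = (i : ℕ) → β i ≤ β j + 1}
      {h : Fin n → ℕ |
        (∀ i : Fin n, (i : ℕ) + 1 ≤ h i ∧ h i ≤ n) ∧
          ∀ i j : Fin n, i ≤ j → h i ≤ h j} := by
    intro β ⟨hb, hs⟩
    constructor
    · intro k
      constructor
      · have hsub : (Finset.univ.filter fun j : Fin n => (j : ℕ) < (k : ℕ) + 1) ⊆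
            (Finset.univ.filter fun i : Fin n => (i : ℕ) + 1 - β i ≤ (k : ℕ)) := by
          intro j hj
          simp only [Finset.mem_filter, Finset.mem_univ, true_and] at hj ⊢
          have := (hb j).1
          omega
        have := Finset.card_le_card hsub
        rwa [stmt12_aux_card n ((k : ℕ) + 1) k.isLt] at this
      · calc g β k ≤ (Finset.univ : Finset (Fin n)).card := Finset.card_le_card
              (Finset.filter_subset _ _)
          _ = n := by simp
    · intro k k' hkk'
      apply Finset.card_le_card
      intro j hj
      simp only [Finset.mem_filter, Finset.mem_univ, true_and] at hj ⊢
      have := Fin.le_def.mp hkk'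
      omega
  -- inverse properties
  refine Set.InvOn.bijOn ⟨?_, ?_⟩ hmapf hmapg
  · -- left inverse: g (f h) = h on s
    intro h ⟨hb, hm⟩
    have hb1 : ∀ i : Fin n, (i : ℕ) + 1 ≤ h i := fun i => (hb i).1
    funext k
    show (Finset.univ.filter fun i : Fin n =>
        (i : ℕ) + 1 - ((i : ℕ) + 1 - (Finset.univ.filter fun k : Fin n => h k < (i : ℕ) + 1).card) ≤ (k : ℕ)).card = h k
    have heq : (Finset.univ.filter fun i : Fin n =>
        (i : ℕ) + 1 - ((i : ℕ) + 1 - (Finset.univ.filter fun k : Fin n => h k < (i : ℕ) + 1).card) ≤ (k : ℕ)) =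
        (Finset.univ.filter fun i : Fin n => (i : ℕ) < h k) := by
      apply Finset.filter_congr
      intro i _
      have h1 := hc_le h hb1 i
      have h2 := hiff h hb1 hm i k
      constructor
      · intro hx
        exact h2.mp (by omega)
      · intro hx
        have := h2.mpr hx
        omega
    rw [heq, stmt12_aux_card n (h k) (hb k).2]
  · -- right inverse: f (g β) = β on t
    intro β ⟨hb, hs⟩
    funext i
    show (i : ℕ) + 1 - (Finset.univ.filter fun k : Fin n => g β k < (i : ℕ) + 1).card = β i
    have heq : (Finset.univ.filter fun k : Fin n => g β k < (i : ℕ) + 1) =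
        (Finset.univ.filter fun k : Fin n => (k : ℕ) < (i : ℕ) + 1 - β i) := by
      apply Finset.filter_congr
      intro k _
      have h2 := hgiff β hb hs i k
      constructor
      · intro hx
        exact h2.mp (by omega)
      · intro hx
        have := h2.mpr hx
        omega
    have hβ := hb i
    rw [heq, stmt12_aux_card n ((i : ℕ) + 1 - β i) (by have := i.isLt; omega)]
    omega
end

section
/- Let h' be a Hessenberg function with degree tuple β'. For any i ∈ {1,...,n} and any d ≥ β'_i, the truncated complete symmetric polynomial ẽ_d(x_i, x_{i+1},...,x_n) lies in the ideal J_{h'} = ⟨ẽ_{β'_n}(x_n), ẽ_{β'_{n-1}}(x_{n-1},x_n), ..., ẽ_{β'_1}(x_1,...,x_n)⟩ of ℤ[x_1,...,x_n]. -/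
open MvPolynomial

noncomputable def teN (n : ℕ) (d : ℕ) (S : Finset (Fin n)) : MvPolynomial (Fin n) ℤ :=
  ∑ m ∈ S.sym d, ((m : Multiset (Fin n)).map X).prod

lemma te_eq (n d : ℕ) (S : Finset (Fin n)) : te n (d : ℤ) S = teN n d S := by
  simp [te, teN]

lemma teN_empty (n d : ℕ) : teN n (d + 1) (∅ : Finset (Fin n)) = 0 := by
  simp [teN, Finset.sym_empty]

lemma teN_insert (n d : ℕ) (a : Fin n) (S : Finset (Fin n)) (ha : a ∉ S) :
    teN n (d + 1) (insert a S) = teN n (d + 1) S + X a * teN n d (insert a S) := by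
  classical
  have hsplit := Finset.sum_filter_add_sum_filter_not ((insert a S).sym (d + 1))
    (fun m => a ∈ m) (fun m => (((m : Multiset (Fin n)).map X).prod : MvPolynomial (Fin n) ℤ))
  have h1 : ((insert a S).sym (d + 1)).filter (fun m => a ∉ m) = S.sym (d + 1) := by
    ext m
    simp only [Finset.mem_filter, Finset.mem_sym_iff, Finset.mem_insert]
    constructor
    · rintro ⟨hm, hna⟩ b hb
      rcases hm b hb with rfl | hbS
      · exact absurd hb hna
      · exact hbS
    · intro hm
      refine ⟨fun b hb => Or.inr (hm b hb), fun hmem => ha (hm a hmem)⟩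
  have h2 : ((insert a S).sym (d + 1)).filter (fun m => a ∈ m)
      = ((insert a S).sym d).image (Sym.cons a) := by
    ext m
    simp only [Finset.mem_filter, Finset.mem_sym_iff, Finset.mem_image]
    constructor
    · rintro ⟨hm, ham⟩
      obtain ⟨t, rfl⟩ := Sym.exists_cons_of_mem ham
      exact ⟨t, fun b hb => hm b (Sym.mem_cons_of_mem hb), rfl⟩
    · rintro ⟨t, ht, rfl⟩
      refine ⟨fun b hb => ?_, Sym.mem_cons_self a t⟩
      rcases Sym.mem_cons.mp hb with hba | hbt
      · rw [hba]; exact Finset.mem_insert_self a S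
      · exact ht b hbt
  have h3 : ∑ m ∈ ((insert a S).sym d).image (Sym.cons a),
      (((m : Multiset (Fin n)).map X).prod : MvPolynomial (Fin n) ℤ)
      = X a * ∑ m ∈ (insert a S).sym d, ((m : Multiset (Fin n)).map X).prod := by
    rw [Finset.sum_image (fun x _ y _ hxy => (Sym.cons_inj_right a x y).mp hxy),
      Finset.mul_sum]
    refine Finset.sum_congr rfl fun m _ => ?_
    rw [Sym.coe_cons, Multiset.map_cons, Multiset.prod_cons]
  calc teN n (d + 1) (insert a S)
      = (∑ m ∈ ((insert a S).sym (d + 1)).filter (fun m => a ∈ m),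
          (((m : Multiset (Fin n)).map X).prod : MvPolynomial (Fin n) ℤ))
        + ∑ m ∈ ((insert a S).sym (d + 1)).filter (fun m => a ∉ m),
          ((m : Multiset (Fin n)).map X).prod := hsplit.symm
    _ = teN n (d + 1) S + X a * teN n d (insert a S) := by
        rw [h1, h2, h3, add_comm]; rfl

lemma seg_insert_s13 (n : ℕ) (i : Fin n) :
    seg n ((i : ℕ) + 1) n = insert i (seg n ((i : ℕ) + 2) n) := by
  ext j
  simp only [seg, Finset.mem_filter, Finset.mem_univ, true_and, Finset.mem_insert]
  constructor
  · rintro ⟨h1, h2⟩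
    rcases eq_or_lt_of_le h1 with he | hl
    · left; exact Fin.ext (by omega)
    · right; exact ⟨by omega, h2⟩
  · rintro (rfl | ⟨h1, h2⟩)
    · exact ⟨le_refl _, Nat.succ_le_of_lt (Fin.is_lt _)⟩
    · exact ⟨by omega, h2⟩

lemma not_mem_seg (n : ℕ) (i : Fin n) : i ∉ seg n ((i : ℕ) + 2) n := by
  simp [seg]

lemma seg_empty (n : ℕ) (i : Fin n) (hi : (i : ℕ) + 1 = n) :
    seg n ((i : ℕ) + 2) n = ∅ := by
  ext j
  simp only [seg, Finset.mem_filter, Finset.mem_univ, true_and, Finset.notMem_empty,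
    iff_false, not_and, not_le]
  intro hj
  omega

theorem stmt13 (n : ℕ) (hn : 0 < n) (h : Fin n → ℕ)
    (hh1 : ∀ i : Fin n, (i : ℕ) + 1 ≤ h i ∧ h i ≤ n)
    (hh2 : ∀ i j : Fin n, i ≤ j → h i ≤ h j)
    (β : Fin n → ℕ)
    (hβ : ∀ i : Fin n,
      β i = (i : ℕ) + 1 - (Finset.univ.filter fun k : Fin n => h k < (i : ℕ) + 1).card)
    (i : Fin n) (d : ℕ) (hd : β i ≤ d) :
    te n d (seg n ((i : ℕ) + 1) n) ∈
      Ideal.span (Set.range fun j : Fin n => te n (β j) (seg n ((j : ℕ) + 1) n)) := by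
  classical
  -- counts are bounded: #{k : h k < i+1} ≤ i
  have hcount : ∀ i : Fin n,
      (Finset.univ.filter fun k : Fin n => h k < (i : ℕ) + 1).card ≤ (i : ℕ) := by
    intro i
    calc (Finset.univ.filter fun k : Fin n => h k < (i : ℕ) + 1).card
        ≤ (Finset.Iio i).card := by
          apply Finset.card_le_card
          intro k hk
          simp only [Finset.mem_filter, Finset.mem_univ, true_and] at hk
          have := (hh1 k).1
          simp only [Finset.mem_Iio]
          exact Fin.lt_def.mpr (by omega)
      _ = (i : ℕ) := Fin.card_Iio i
  have hβ1 : ∀ i : Fin n, 1 ≤ β i := by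
    intro i
    rw [hβ i]
    have := hcount i
    omega
  have hβ2 : ∀ (i j : Fin n), (j : ℕ) = (i : ℕ) + 1 → β j ≤ β i + 1 := by
    intro i j hij
    rw [hβ i, hβ j, hij]
    have hmono : (Finset.univ.filter fun k : Fin n => h k < (i : ℕ) + 1).card
        ≤ (Finset.univ.filter fun k : Fin n => h k < (i : ℕ) + 1 + 1).card := by
      apply Finset.card_le_card
      intro k hk
      simp only [Finset.mem_filter, Finset.mem_univ, true_and] at hk ⊢
      omega
    have := hcount i
    omega
  -- main induction
  set J := Ideal.span (Set.range fun j : Fin n => te n (β j) (seg n ((j : ℕ) + 1) n)) with hJ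
  suffices H : ∀ N : ℕ, ∀ (i : Fin n) (d : ℕ), d + (n - (i : ℕ)) ≤ N → β i ≤ d →
      teN n d (seg n ((i : ℕ) + 1) n) ∈ J by
    rw [te_eq]
    exact H (d + n) i d (by omega) hd
  intro N
  induction N with
  | zero => intro i d hN _; omega
  | succ N IH =>
    intro i d hN hd
    rcases eq_or_lt_of_le hd with he | hlt
    · -- d = β i : generator
      rw [← he, ← te_eq]
      exact Ideal.subset_span ⟨i, rfl⟩
    · -- d > β i, so d = e + 1 with e ≥ β i
      obtain ⟨e, rfl⟩ : ∃ e, d = e + 1 := ⟨d - 1, by omega⟩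
      rw [seg_insert_s13 n i, teN_insert n e i _ (not_mem_seg n i), ← seg_insert_s13 n i]
      have hterm2 : X i * teN n e (seg n ((i : ℕ) + 1) n) ∈ J := by
        exact Ideal.mul_mem_left _ _ (IH i e (by omega) (by omega))
      have hterm1 : teN n (e + 1) (seg n ((i : ℕ) + 2) n) ∈ J := by
        rcases eq_or_lt_of_le (Nat.succ_le_of_lt i.isLt) with hlast | hless
        · rw [seg_empty n i (by omega), teN_empty]
          exact Ideal.zero_mem _
        · -- i+1 < n, so i' = i+1 is a valid index
          set i' : Fin n := ⟨(i : ℕ) + 1, hless⟩ with hi'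
          have : seg n ((i : ℕ) + 2) n = seg n ((i' : ℕ) + 1) n := rfl
          rw [this]
          refine IH i' (e + 1) ?_ ?_
          · have : (i' : ℕ) = (i : ℕ) + 1 := rfl
            omega
          · have := hβ2 i i' rfl
            omega
      exact Ideal.add_mem _ hterm1 hterm2
end

section
/- If h > h' are Hessenberg functions (h_i ≥ h'_i for all i and h ≠ h'), then I_h ⊆ I_{h'}, where I_h is the ideal of ℤ[x_1,...,x_n] generated by the truncated elementary symmetric polynomials e_{h_i - r}(x_1,...,x_{h_i}) for 1 ≤ i ≤ n and 0 ≤ r ≤ i - 1. -/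
open MvPolynomial

/-!
Adjoining a variable `a` to a set `S` gives `e_{d+1}(S ∪ {a}) = e_{d+1}(S) + a e_d(S)`. Iterating
this from `S = {x_1, …, x_{m'}}` up to `{x_1, …, x_m}` lowers the degree by at most `m - m'`, so
`e_d(x_1, …, x_m)` with `m ≤ d + r` is a combination of the `e_{m'-j}(x_1, …, x_{m'})` with
`j ≤ r` (degrees above `m'` vanish). For `m = h_i`, `m' = h'_i`, `d = h_i - r` these are
generators of `I_{h'}`.
-/

namespace Multiset

variable {R : Type*} [CommSemiring R]

theorem esymm_zero (s : Multiset R) : s.esymm 0 = 1 := by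
  simp [esymm]

theorem esymm_eq_zero_of_card_lt {s : Multiset R} {d : ℕ} (h : card s < d) : s.esymm d = 0 := by
  simp [esymm, powersetCard_eq_empty _ h]

theorem esymm_cons_succ (a : R) (s : Multiset R) (d : ℕ) :
    (a ::ₘ s).esymm (d + 1) = s.esymm (d + 1) + a * s.esymm d := by
  simp [esymm, powersetCard_cons, sum_map_mul_left]

theorem esymm_add_mem_span_esymm (s t : Multiset R) {r d : ℕ} (h : card s + card t ≤ d + r) :
    (s + t).esymm d ∈ Ideal.span {p | ∃ j ≤ r, p = s.esymm (card s - j)} := by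
  induction t using Multiset.induction_on generalizing d with
  | empty =>
    rw [add_zero]
    rcases le_or_gt d (card s) with hd | hd
    · rw [card_zero, add_zero] at h
      exact Ideal.subset_span ⟨card s - d, by omega, by rw [Nat.sub_sub_self hd]⟩
    · rw [esymm_eq_zero_of_card_lt hd]
      exact Ideal.zero_mem _
  | cons a t ih =>
    rw [add_cons]
    rw [card_cons] at h
    cases d with
    | zero => simpa only [esymm_zero] using ih (d := 0) (by omega)
    | succ d =>
      rw [esymm_cons_succ]
      exact Ideal.add_mem _ (ih (by omega)) (Ideal.mul_mem_left _ _ (ih (by omega)))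

end Multiset

theorem Finset.esymm_map_val_mem_span_of_subset {σ R : Type*} [CommSemiring R] (f : σ → R)
    {S T : Finset σ} (hST : S ⊆ T) {r d : ℕ} (h : T.card ≤ d + r) :
    (T.val.map f).esymm d ∈ Ideal.span {p | ∃ j ≤ r, p = (S.val.map f).esymm (S.card - j)} := by
  classical
  have hsplit : T.val = S.val + (T.val - S.val) :=
    (add_tsub_cancel_of_le (Finset.val_le_iff.mpr hST)).symm
  have hcard : (S.val.map f).card + ((T.val - S.val).map f).card = T.card := by
    rw [← Multiset.card_add, ← Multiset.map_add, ← hsplit, Multiset.card_map, Finset.card_val]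
  have := (S.val.map f).esymm_add_mem_span_esymm ((T.val - S.val).map f) (hcard.trans_le h)
  rwa [← Multiset.map_add, ← hsplit, Multiset.card_map, Finset.card_val] at this

theorem ee_natCast (n d : ℕ) (S : Finset (Fin n)) : ee n d S = (S.val.map X).esymm d := by
  simp [ee, Finset.esymm_map_val]

theorem seg_one_mono (n : ℕ) {m m' : ℕ} (h : m' ≤ m) : seg n 1 m' ⊆ seg n 1 m := by
  intro i
  simp only [seg, Finset.mem_filter, Finset.mem_univ, true_and]
  omega

theorem card_seg_one (n : ℕ) {m : ℕ} (hm : m ≤ n) : (seg n 1 m).card = m := by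
  simp only [seg, Nat.one_le_iff_ne_zero, Nat.add_one_ne_zero, ne_eq, not_false_eq_true, true_and,
    Order.add_one_le_iff, Fin.card_filter_val_lt, min_eq_right hm]

theorem stmt15_general (n : ℕ) (h h' : Fin n → ℕ)
    (hh1 : ∀ i : Fin n, (i : ℕ) + 1 ≤ h i ∧ h i ≤ n)
    (hh1' : ∀ i : Fin n, (i : ℕ) + 1 ≤ h' i ∧ h' i ≤ n)
    (hge : ∀ i : Fin n, h' i ≤ h i) :
    Ideal.span {p : MvPolynomial (Fin n) ℤ |
        ∃ i : Fin n, ∃ r : ℕ, r ≤ (i : ℕ) ∧ p = ee n ((h i : ℤ) - r) (seg n 1 (h i))} ≤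
      Ideal.span {p : MvPolynomial (Fin n) ℤ |
        ∃ i : Fin n, ∃ r : ℕ, r ≤ (i : ℕ) ∧ p = ee n ((h' i : ℤ) - r) (seg n 1 (h' i))} := by
  rw [Ideal.span_le]
  rintro _ ⟨i, r, hr, rfl⟩
  obtain ⟨hi, hhn⟩ := hh1 i
  obtain ⟨hi', hh'n⟩ := hh1' i
  rw [show (h i : ℤ) - r = ((h i - r : ℕ) : ℤ) by omega, ee_natCast]
  refine Ideal.span_mono ?_ <|
    Finset.esymm_map_val_mem_span_of_subset X (seg_one_mono n (hge i)) (r := r) ?_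
  · rintro _ ⟨j, hj, rfl⟩
    refine ⟨i, j, hj.trans hr, ?_⟩
    rw [card_seg_one n hh'n, show (h' i : ℤ) - j = ((h' i - j : ℕ) : ℤ) by omega, ee_natCast]
  · rw [card_seg_one n hhn]
    omega

theorem stmt15 (n : ℕ) (hn : 0 < n) (h h' : Fin n → ℕ)
    (hh1 : ∀ i : Fin n, (i : ℕ) + 1 ≤ h i ∧ h i ≤ n)
    (hh2 : ∀ i j : Fin n, i ≤ j → h i ≤ h j)
    (hh1' : ∀ i : Fin n, (i : ℕ) + 1 ≤ h' i ∧ h' i ≤ n)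
    (hh2' : ∀ i j : Fin n, i ≤ j → h' i ≤ h' j)
    (hge : ∀ i : Fin n, h' i ≤ h i) (hne : h ≠ h') :
    Ideal.span {p : MvPolynomial (Fin n) ℤ |
        ∃ i : Fin n, ∃ r : ℕ, r ≤ (i : ℕ) ∧ p = ee n ((h i : ℤ) - r) (seg n 1 (h i))} ≤
      Ideal.span {p : MvPolynomial (Fin n) ℤ |
        ∃ i : Fin n, ∃ r : ℕ, r ≤ (i : ℕ) ∧ p = ee n ((h' i : ℤ) - r) (seg n 1 (h' i))} :=
  stmt15_general n h h' hh1 hh1' hge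
end

section
/- For a Hessenberg function h with degree tuple β, the quotient ℚ[x_1,...,x_n]/J_h is a finite-dimensional ℚ-vector space with basis the images of the monomials x_1^{α_1}···x_n^{α_n} with 0 ≤ α_i ≤ β_i - 1 for each i; in particular its dimension is ∏_{i=1}^{n} β_i. -/
open MvPolynomial

/-- Truncated complete homogeneous symmetric polynomial of degree `d` over `ℚ`. -/
noncomputable def teQ (n d : ℕ) (S : Finset (Fin n)) : MvPolynomial (Fin n) ℚ :=
  ∑ m ∈ S.sym d, ((m : Multiset (Fin n)).map X).prod

/-!
Each generator `ẽ_{β_j}(x_j, …, x_n)` is monic of degree `β_j` in `x_j`, and its other terms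
involve only `x_j, …, x_n`, with `x_j`-degree below `β_j`: the generators form a triangular set.
Division by them for the lexicographic order shows that the reduced monomials (those with exponent
of `x_i` below `β_i`) span the quotient.
For independence, induct on the number of variables and view polynomials as polynomials in `x_1`
over the remaining ones. Modulo the ideal `I` generated by the remaining generators, a reduced
element of `J` becomes a multiple of the monic image of the first generator while having smaller
degree, so it vanishes; hence its coefficients are reduced elements of `I`, zero by induction.
-/

namespace MvPolynomial

variable {R : Type*} [CommRing R]

section Monomials

variable {σ : Type*}

theorem multiset_prod_map_X [DecidableEq σ] (s : Multiset σ) :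
    (s.map X).prod = monomial (Multiset.toFinsupp s) (1 : R) := by
  induction s using Multiset.induction_on with
  | empty => simp
  | cons a s ih =>
    simp [ih, X, monomial_mul, ← Multiset.singleton_add, Multiset.toFinsupp_add]

variable [Fintype σ]

theorem prod_X_pow_eq_monomial_equivFunOnFinite (e : σ → ℕ) :
    ∏ i, X i ^ e i = monomial (Finsupp.equivFunOnFinite.symm e) (1 : R) := by
  classical
  rw [prod_X_pow]
  congr
  ext
  simp

theorem linearIndependent_prod_X_pow (d : σ → ℕ) :
    LinearIndependent R fun α : (i : σ) → Fin (d i) =>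
      (∏ i, X i ^ (α i : ℕ) : MvPolynomial σ R) := by
  have hinj : Function.Injective fun α : (i : σ) → Fin (d i) =>
      Finsupp.equivFunOnFinite.symm fun i => (α i : ℕ) := fun α β h => by
    ext i
    simpa using DFunLike.congr_fun h i
  convert (basisMonomials σ R).linearIndependent.comp _ hinj with α
  · simp [prod_X_pow_eq_monomial_equivFunOnFinite]
  · rfl

theorem span_prod_X_pow (d : σ → ℕ) :
    Submodule.span R (Set.range fun α : (i : σ) → Fin (d i) =>
      (∏ i, X i ^ (α i : ℕ) : MvPolynomial σ R)) =
      restrictSupport R {c | ∀ i, c i < d i} := by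
  rw [restrictSupport_eq_span]
  congr 1
  ext p
  constructor
  · rintro ⟨α, rfl⟩
    exact ⟨_, fun i => by simp, (prod_X_pow_eq_monomial_equivFunOnFinite _).symm⟩
  · rintro ⟨c, hc, rfl⟩
    refine ⟨fun i => ⟨c i, hc i⟩, ?_⟩
    dsimp only
    rw [prod_X_pow_eq_monomial_equivFunOnFinite]
    congr
    ext
    simp

end Monomials

variable {n : ℕ}

def IsMonicTriangular (i : Fin n) (d : ℕ) (f : MvPolynomial (Fin n) R) : Prop :=
  ∀ c ∈ (f - X i ^ d).support, (∀ k < i, c k = 0) ∧ c i < d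

namespace IsMonicTriangular

section Single

variable {i : Fin n} {d : ℕ} {f : MvPolynomial (Fin n) R}

theorem toLex_lt (hf : IsMonicTriangular i d f) {c : Fin n →₀ ℕ}
    (hc : c ∈ (f - X i ^ d).support) : toLex c < toLex (Finsupp.single i d) :=
  Finsupp.Lex.lt_iff.2 ⟨i, fun k hk => by simp [(hf c hc).1 k hk, Finsupp.single_eq_of_ne hk.ne],
    by simpa using (hf c hc).2⟩

theorem coeff_single (hf : IsMonicTriangular i d f) : coeff (Finsupp.single i d) f = 1 := by
  have : coeff (Finsupp.single i d) (f - X i ^ d) = 0 := by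
    by_contra h
    simpa using (hf _ (mem_support_iff.2 h)).2
  rwa [coeff_sub, coeff_X_pow, if_pos rfl, sub_eq_zero] at this

theorem lex_degree [Nontrivial R] (hf : IsMonicTriangular i d f) :
    MonomialOrder.lex.degree f = Finsupp.single i d := by
  refine MonomialOrder.lex.toSyn.injective (le_antisymm ?_ ?_)
  · refine MonomialOrder.degree_le_iff.2 fun c hc => ?_
    by_cases hci : c = Finsupp.single i d
    · rw [hci]
    refine (hf.toLex_lt (mem_support_iff.2 fun h => ?_)).le
    rw [coeff_sub, coeff_X_pow, if_neg (Ne.symm hci), sub_zero] at h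
    exact mem_support_iff.1 hc h
  · exact MonomialOrder.le_degree (mem_support_iff.2 (by rw [hf.coeff_single]; exact one_ne_zero))

theorem lex_leadingCoeff [Nontrivial R] (hf : IsMonicTriangular i d f) :
    MonomialOrder.lex.leadingCoeff f = 1 := by
  rw [MonomialOrder.leadingCoeff, hf.lex_degree, hf.coeff_single]

end Single

theorem exists_sub_mem_span {d : Fin n → ℕ} {f : Fin n → MvPolynomial (Fin n) R}
    (hf : ∀ i, IsMonicTriangular i (d i) (f i)) (p : MvPolynomial (Fin n) R) :
    ∃ r ∈ restrictSupport R {c | ∀ i, c i < d i}, p - r ∈ Ideal.span (Set.range f) := by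
  rcases subsingleton_or_nontrivial R with _ | _
  · exact ⟨0, zero_mem _, by rw [Subsingleton.elim (p - 0) 0]; exact zero_mem _⟩
  obtain ⟨g, r, hpr, -, hr⟩ :=
    MonomialOrder.lex.div (b := f) (fun i => by rw [(hf i).lex_leadingCoeff]; exact isUnit_one) p
  refine ⟨r, fun c hc i => ?_, ?_⟩
  · simpa [(hf i).lex_degree, Finsupp.single_le_iff] using hr c hc i
  · rw [hpr, add_sub_cancel_right, Ideal.span, ← Finsupp.range_linearCombination]
    exact LinearMap.mem_range_self _ g

end IsMonicTriangular

theorem degree_finSuccEquiv_lt {p : MvPolynomial (Fin (n + 1)) R} {d : ℕ}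
    (hp : ∀ c ∈ p.support, c 0 < d) : (finSuccEquiv R n p).degree < d := by
  rw [Polynomial.degree_lt_iff_coeff_zero]
  intro k hk
  ext c
  rw [finSuccEquiv_coeff_coeff, coeff_zero]
  by_contra hc
  have := hp _ (mem_support_iff.2 hc)
  rw [Finsupp.cons_zero] at this
  omega

namespace IsMonicTriangular

section FinSucc

variable {i : Fin n} {d : ℕ} {f : MvPolynomial (Fin (n + 1)) R}

theorem finSuccEquiv_eq_C (hf : IsMonicTriangular i.succ d f) :
    finSuccEquiv R n f = Polynomial.C ((finSuccEquiv R n f).coeff 0) := by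
  rw [← Polynomial.degree_le_zero_iff]
  have hsplit : finSuccEquiv R n f =
      Polynomial.C (X i ^ d) + finSuccEquiv R n (f - X i.succ ^ d) := by
    simp [finSuccEquiv_X_succ]
  rw [hsplit]
  refine Polynomial.degree_add_le_of_degree_le Polynomial.degree_C_le ?_
  refine Nat.WithBot.lt_one_iff_le_zero.1 (degree_finSuccEquiv_lt fun c hc => ?_)
  rw [(hf c hc).1 0 (Fin.succ_pos i)]
  exact one_pos

theorem coeff_zero_finSuccEquiv (hf : IsMonicTriangular i.succ d f) :
    IsMonicTriangular i d ((finSuccEquiv R n f).coeff 0) := by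
  intro c hc
  have hsub : (finSuccEquiv R n f).coeff 0 - X i ^ d =
      (finSuccEquiv R n (f - X i.succ ^ d)).coeff 0 := by
    rw [map_sub, map_pow, finSuccEquiv_X_succ, ← Polynomial.C_pow, Polynomial.coeff_sub,
      Polynomial.coeff_C_zero]
  rw [hsub, mem_support_coeff_finSuccEquiv] at hc
  obtain ⟨hlow, hdeg⟩ := hf _ hc
  exact ⟨fun k hk => by simpa using hlow k.succ (Fin.succ_lt_succ_iff.2 hk),
    by simpa using hdeg⟩

end FinSucc

theorem map_finSuccEquiv_eq_zero {d : Fin (n + 1) → ℕ}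
    {f : Fin (n + 1) → MvPolynomial (Fin (n + 1)) R}
    (hf : ∀ i, IsMonicTriangular i (d i) (f i)) {p : MvPolynomial (Fin (n + 1)) R}
    (hp : p ∈ Ideal.span (Set.range f)) (hp0 : ∀ c ∈ p.support, c 0 < d 0) :
    (finSuccEquiv R n p).map
      (Ideal.Quotient.mk
        (Ideal.span (Set.range fun j : Fin n => (finSuccEquiv R n (f j.succ)).coeff 0))) = 0 := by
  set I := Ideal.span (Set.range fun j : Fin n => (finSuccEquiv R n (f j.succ)).coeff 0)
  let φ : MvPolynomial (Fin (n + 1)) R →+* Polynomial (MvPolynomial (Fin n) R ⧸ I) :=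
    (Polynomial.mapRingHom (Ideal.Quotient.mk I)).comp (finSuccEquiv R n).toRingHom
  have hφ (q) : φ q = (finSuccEquiv R n q).map (Ideal.Quotient.mk I) := rfl
  have hdvd : φ (f 0) ∣ φ p := by
    refine (Ideal.mem_span_singleton (α := Polynomial (MvPolynomial (Fin n) R ⧸ I))).1 ?_
    rw [← Ideal.mem_comap]
    refine Ideal.span_le.2 ?_ hp
    rintro _ ⟨i, rfl⟩
    cases i using Fin.cases with
    | zero => exact Ideal.mem_span_singleton_self _
    | succ j =>
      have hmem : (finSuccEquiv R n (f j.succ)).coeff 0 ∈ I := Ideal.subset_span ⟨j, rfl⟩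
      rw [SetLike.mem_coe, Ideal.mem_comap, hφ (f j.succ), (hf j.succ).finSuccEquiv_eq_C,
        Polynomial.map_C, Ideal.Quotient.eq_zero_iff_mem.2 hmem, map_zero]
      exact zero_mem _
  rcases subsingleton_or_nontrivial (MvPolynomial (Fin n) R ⧸ I) with _ | _
  · exact Subsingleton.elim _ _
  by_contra hne
  have hf0 : φ (f 0) = Polynomial.X ^ d 0 +
      (finSuccEquiv R n (f 0 - X 0 ^ d 0)).map (Ideal.Quotient.mk I) := by
    simp [hφ, finSuccEquiv_X_zero]
  have hlow : ((finSuccEquiv R n (f 0 - X 0 ^ d 0)).map (Ideal.Quotient.mk I)).degree < d 0 :=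
    Polynomial.degree_map_le.trans_lt (degree_finSuccEquiv_lt fun c hc => (hf 0 c hc).2)
  rw [hf0] at hdvd
  refine (Polynomial.monic_X_pow_add hlow).not_dvd_of_degree_lt hne ?_ hdvd
  rw [Polynomial.degree_add_eq_left_of_degree_lt (by rwa [Polynomial.degree_X_pow]),
    Polynomial.degree_X_pow]
  exact Polynomial.degree_map_le.trans_lt (degree_finSuccEquiv_lt hp0)

theorem eq_zero_of_mem_span {d : Fin n → ℕ} {f : Fin n → MvPolynomial (Fin n) R}
    (hf : ∀ i, IsMonicTriangular i (d i) (f i)) {p : MvPolynomial (Fin n) R}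
    (hp : p ∈ Ideal.span (Set.range f)) (hred : p ∈ restrictSupport R {c | ∀ i, c i < d i}) :
    p = 0 := by
  induction n with
  | zero => simpa [Set.range_eq_empty] using hp
  | succ n ih =>
    have hzero := map_finSuccEquiv_eq_zero hf hp fun c hc => hred hc 0
    suffices finSuccEquiv R n p = 0 by simpa using this
    ext1 k
    refine ih (fun j => (hf j.succ).coeff_zero_finSuccEquiv) ?_ fun c hc i => ?_
    · rw [← Ideal.Quotient.eq_zero_iff_mem, ← Polynomial.coeff_map, hzero,
        Polynomial.coeff_zero]
    · simpa using hred (mem_support_coeff_finSuccEquiv.1 hc) i.succ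

section Quotient

variable {d : Fin n → ℕ} {f : Fin n → MvPolynomial (Fin n) R}

theorem linearIndependent_mk (hf : ∀ i, IsMonicTriangular i (d i) (f i)) :
    LinearIndependent R fun α : (i : Fin n) → Fin (d i) =>
      Ideal.Quotient.mk (Ideal.span (Set.range f)) (∏ i, X i ^ (α i : ℕ)) := by
  refine (linearIndependent_prod_X_pow d).map
    (f := (Ideal.Quotient.mkₐ R (Ideal.span (Set.range f))).toLinearMap) ?_
  rw [span_prod_X_pow, Submodule.disjoint_def]
  intro p hp hker
  exact eq_zero_of_mem_span hf (Ideal.Quotient.eq_zero_iff_mem.1 hker) hp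

theorem span_mk_eq_top (hf : ∀ i, IsMonicTriangular i (d i) (f i)) :
    Submodule.span R (Set.range fun α : (i : Fin n) → Fin (d i) =>
      Ideal.Quotient.mk (Ideal.span (Set.range f)) (∏ i, X i ^ (α i : ℕ))) = ⊤ := by
  rw [eq_top_iff]
  rintro x -
  obtain ⟨p, rfl⟩ := Ideal.Quotient.mk_surjective x
  obtain ⟨r, hr, hpr⟩ := exists_sub_mem_span hf p
  rw [(Ideal.Quotient.mk_eq_mk_iff_sub_mem p r).2 hpr]
  have := Submodule.mem_map_of_mem
    (f := (Ideal.Quotient.mkₐ R (Ideal.span (Set.range f))).toLinearMap)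
    ((span_prod_X_pow d).ge hr)
  rwa [Submodule.map_span, ← Set.range_comp] at this

end Quotient

end IsMonicTriangular

end MvPolynomial

theorem mem_seg {n : ℕ} (j a : Fin n) : a ∈ seg n ((j : ℕ) + 1) n ↔ j ≤ a := by
  simp only [seg, Finset.mem_filter, Finset.mem_univ, true_and, Fin.le_def]
  omega

theorem isMonicTriangular_teQ {n : ℕ} (j : Fin n) (d : ℕ) :
    IsMonicTriangular j d (teQ n d (seg n ((j : ℕ) + 1) n)) := by
  intro c hc
  have hrep : Sym.replicate d j ∈ (seg n ((j : ℕ) + 1) n).sym d :=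
    Finset.mem_sym_iff.2 fun a ha => by rw [(Sym.mem_replicate.1 ha).2, mem_seg]
  rw [teQ, ← Finset.add_sum_erase _ _ hrep] at hc
  simp only [Sym.coe_replicate, Multiset.map_replicate, Multiset.prod_replicate,
    add_sub_cancel_left] at hc
  obtain ⟨m, hm, hcm⟩ := Finset.mem_biUnion.1 (support_sum hc)
  rw [multiset_prod_map_X, support_monomial, if_neg one_ne_zero, Finset.mem_singleton] at hcm
  subst hcm
  obtain ⟨hne, hm⟩ := Finset.mem_erase.1 hm
  have hge : ∀ a ∈ (m : Multiset (Fin n)), j ≤ a := fun a ha =>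
    (mem_seg j a).1 (Finset.mem_sym_iff.1 hm a ha)
  simp only [Multiset.toFinsupp_apply]
  refine ⟨fun k hk => Multiset.count_eq_zero.2 fun hkm => (hge k hkm).not_gt hk, ?_⟩
  refine ((Multiset.count_le_card j _).trans_eq m.2).lt_of_ne fun hcount => hne (Sym.ext ?_)
  rw [Sym.coe_replicate, Multiset.eq_replicate]
  exact ⟨m.2, fun b hb => (Multiset.count_eq_card.1 (hcount.trans m.2.symm) b hb).symm⟩

theorem stmt19_general (n : ℕ) (β : Fin n → ℕ)
    (J : Ideal (MvPolynomial (Fin n) ℚ))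
    (hJ : J = Ideal.span (Set.range fun j : Fin n => teQ n (β j) (seg n ((j : ℕ) + 1) n))) :
    FiniteDimensional ℚ (MvPolynomial (Fin n) ℚ ⧸ J) ∧
    LinearIndependent ℚ (fun α : (i : Fin n) → Fin (β i) =>
      Ideal.Quotient.mk J (∏ i : Fin n, X i ^ ((α i : ℕ)))) ∧
    Submodule.span ℚ (Set.range fun α : (i : Fin n) → Fin (β i) =>
      Ideal.Quotient.mk J (∏ i : Fin n, X i ^ ((α i : ℕ)))) = ⊤ ∧
    Module.finrank ℚ (MvPolynomial (Fin n) ℚ ⧸ J) = ∏ i : Fin n, β i := by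
  subst hJ
  have hf := fun j => isMonicTriangular_teQ j (β j)
  have hli := IsMonicTriangular.linearIndependent_mk hf
  have hspan := IsMonicTriangular.span_mk_eq_top hf
  let b := Module.Basis.mk hli hspan.ge
  refine ⟨.of_basis b, hli, hspan, ?_⟩
  rw [Module.finrank_eq_card_basis b, Fintype.card_pi]
  simp

theorem stmt19 (n : ℕ) (hn : 0 < n) (h : Fin n → ℕ)
    (hh1 : ∀ i : Fin n, (i : ℕ) + 1 ≤ h i ∧ h i ≤ n)
    (hh2 : ∀ i j : Fin n, i ≤ j → h i ≤ h j)
    (β : Fin n → ℕ)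
    (hβ : ∀ i : Fin n,
      β i = (i : ℕ) + 1 - (Finset.univ.filter fun k : Fin n => h k < (i : ℕ) + 1).card)
    (J : Ideal (MvPolynomial (Fin n) ℚ))
    (hJ : J = Ideal.span (Set.range fun j : Fin n => teQ n (β j) (seg n ((j : ℕ) + 1) n))) :
    FiniteDimensional ℚ (MvPolynomial (Fin n) ℚ ⧸ J) ∧
    LinearIndependent ℚ (fun α : (i : Fin n) → Fin (β i) =>
      Ideal.Quotient.mk J (∏ i : Fin n, X i ^ ((α i : ℕ)))) ∧
    Submodule.span ℚ (Set.range fun α : (i : Fin n) → Fin (β i) =>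
      Ideal.Quotient.mk J (∏ i : Fin n, X i ^ ((α i : ℕ)))) = ⊤ ∧
    Module.finrank ℚ (MvPolynomial (Fin n) ℚ ⧸ J) = ∏ i : Fin n, β i :=
  stmt19_general n β J hJ
end
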